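/- Let l, n be positive integers and let D be a binary linear code of length l+n (a linear subspace of F_2^{l+n}) with minimum Hamming weight δ. Suppose (v_1,...,v_l) and (w_1,...,w_l) are two tuples of codewords of D such that for each j both the first l coordinates of v_j and the first l coordinates of w_j equal the j-th standard unit vector e_j of F_2^l, and such that (⋃_{j=1}^l supp(v_j)) \ {1,...,l} = (⋃_{j=1}^l supp(w_j)) \ {1,...,l} =: T with |T| = m. If 2m < 3δ − 2, then v_j = w_j for all j = 1,...,l. -/

import Mathlib

/-- The minimum Hamming weight of a nonzero codeword of `D`. -/
noncomputable def minWeight {N : ℕ} (D : Submodule (ZMod 2) (Fin N → ZMod 2)) : ℕ :=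
  sInf {w | ∃ c ∈ D, c ≠ 0 ∧ w = hammingNorm c}

/-!
Suppose `v_j ≠ w_j`. For `x, y ∈ F_2^N`, `d(x, y) + wt x + wt y = 2 |supp x ∪ supp y|`. Both `v_j` and
`w_j` are supported in `{j} ∪ T`, and `v_j`, `w_j`, `v_j - w_j` are nonzero codewords, so
`3δ ≤ 2(m + 1)`, contradicting `2m + 2 < 3δ`.
-/

open Finset

section MinWeight

variable {N : ℕ} {D : Submodule (ZMod 2) (Fin N → ZMod 2)}

theorem minWeight_le_hammingNorm {c : Fin N → ZMod 2} (hc : c ∈ D) (hc0 : c ≠ 0) :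
    minWeight D ≤ hammingNorm c :=
  Nat.sInf_le ⟨c, hc, hc0, rfl⟩

theorem minWeight_le_hammingDist {x y : Fin N → ZMod 2} (hx : x ∈ D) (hy : y ∈ D)
    (hxy : x ≠ y) : minWeight D ≤ hammingDist x y := by
  rw [hammingDist_eq_hammingNorm]
  exact minWeight_le_hammingNorm (D.add_mem (D.neg_mem hx) hy) (neg_add_eq_zero.not.mpr hxy)

end MinWeight

theorem ZMod.hammingDist_add_hammingNorm_add_hammingNorm {ι : Type*} [Fintype ι]
    (x y : ι → ZMod 2) :
    hammingDist x y + hammingNorm x + hammingNorm y = 2 * #{i | x i ≠ 0 ∨ y i ≠ 0} := by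
  have pointwise : ∀ a b : ZMod 2,
      ((if a ≠ b then 1 else 0) + (if a ≠ 0 then 1 else 0) + if b ≠ 0 then 1 else 0 : ℕ) =
        2 * if a ≠ 0 ∨ b ≠ 0 then 1 else 0 := by
    decide
  simp only [hammingDist, hammingNorm, card_filter, ← sum_add_distrib, mul_sum, pointwise]

section UnitHead

variable {R : Type*} [Zero R] [One R] {l n : ℕ}

theorem eq_castAdd_of_apply_ne_zero {c : Fin (l + n) → R} {j : Fin l}
    (hunit : ∀ j' : Fin l, c (Fin.castAdd n j') = if j' = j then 1 else 0)
    {h : Fin (l + n)} (hc : c h ≠ 0) (hl : (h : ℕ) < l) : h = Fin.castAdd n j := by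
  have hc' : c (Fin.castAdd n ⟨h, hl⟩) ≠ 0 := hc
  rw [hunit] at hc'
  rw [← (ite_ne_right_iff.mp hc').1]
  rfl

theorem eq_castAdd_or_mem_of_apply_ne_zero {u : Fin l → Fin (l + n) → R}
    (hunit : ∀ j j' : Fin l, u j (Fin.castAdd n j') = if j' = j then 1 else 0)
    {T : Set (Fin (l + n))} (hT : (⋃ j, {h | u j h ≠ 0}) \ {h : Fin (l + n) | (h : ℕ) < l} = T)
    {j : Fin l} {h : Fin (l + n)} (hu : u j h ≠ 0) : h = Fin.castAdd n j ∨ h ∈ T := by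
  by_cases hl : (h : ℕ) < l
  · exact .inl (eq_castAdd_of_apply_ne_zero (hunit j) hu hl)
  · exact .inr (hT ▸ ⟨Set.mem_iUnion.mpr ⟨j, hu⟩, hl⟩)

end UnitHead

theorem tuple_unique_of_small_access_group_general
    (l n : ℕ)
    (D : Submodule (ZMod 2) (Fin (l + n) → ZMod 2))
    (δ : ℕ) (hδ : δ = minWeight D)
    (v w : Fin l → Fin (l + n) → ZMod 2)
    (hv : ∀ j, v j ∈ D) (hw : ∀ j, w j ∈ D)
    (hvunit : ∀ j j' : Fin l, v j (Fin.castAdd n j') = if j' = j then 1 else 0)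
    (hwunit : ∀ j j' : Fin l, w j (Fin.castAdd n j') = if j' = j then 1 else 0)
    (T : Set (Fin (l + n)))
    (hvT : (⋃ j, {h | v j h ≠ 0}) \ {h : Fin (l + n) | (h : ℕ) < l} = T)
    (hwT : (⋃ j, {h | w j h ≠ 0}) \ {h : Fin (l + n) | (h : ℕ) < l} = T)
    (m : ℕ) (hm : T.ncard = m)
    (hsmall : 2 * m + 2 < 3 * δ) :
    ∀ j, v j = w j := by
  classical
  intro j
  by_contra hne
  have hv0 : v j ≠ 0 := fun h0 => by simpa [h0] using hvunit j j
  have hw0 : w j ≠ 0 := fun h0 => by simpa [h0] using hwunit j j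
  have hsupp : #{h | v j h ≠ 0 ∨ w j h ≠ 0} ≤ m + 1 := by
    rw [← hm, Set.ncard_eq_toFinset_card']
    refine (card_le_card fun h hh => ?_).trans (card_insert_le (Fin.castAdd n j) _)
    rw [mem_insert, Set.mem_toFinset]
    rcases (mem_filter.mp hh).2 with hh | hh
    · exact eq_castAdd_or_mem_of_apply_ne_zero hvunit hvT hh
    · exact eq_castAdd_or_mem_of_apply_ne_zero hwunit hwT hh
  have hweights := ZMod.hammingDist_add_hammingNorm_add_hammingNorm (v j) (w j)
  have hdist := minWeight_le_hammingDist (hv j) (hw j) hne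
  have hvδ := minWeight_le_hammingNorm (hv j) hv0
  have hwδ := minWeight_le_hammingNorm (hw j) hw0
  omega

/-- Uniqueness step in the proof of **Theorem 6**: let `D` be a binary code of length `l + n`
of minimum weight `δ`, and let `(v_1, …, v_l)` and `(w_1, …, w_l)` be tuples of codewords of
`D` whose first `l` coordinates form the standard unit vectors of `F_2^l` and which have the
same union of supports `T` outside the first `l` coordinates, with `|T| = m`.
If `m < (3/2)δ − 1` (in the equivalent integer form `2m + 2 < 3δ`), then `v_j = w_j`
for all `j`. -/
theorem tuple_unique_of_small_access_group
    (l n : ℕ) (hl : 0 < l) (hn : 0 < n)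
    (D : Submodule (ZMod 2) (Fin (l + n) → ZMod 2))
    (δ : ℕ) (hδ : δ = minWeight D)
    (v w : Fin l → Fin (l + n) → ZMod 2)
    (hv : ∀ j, v j ∈ D) (hw : ∀ j, w j ∈ D)
    (hvunit : ∀ j j' : Fin l, v j (Fin.castAdd n j') = if j' = j then 1 else 0)
    (hwunit : ∀ j j' : Fin l, w j (Fin.castAdd n j') = if j' = j then 1 else 0)
    (T : Set (Fin (l + n)))
    (hvT : (⋃ j, {h | v j h ≠ 0}) \ {h : Fin (l + n) | (h : ℕ) < l} = T)
    (hwT : (⋃ j, {h | w j h ≠ 0}) \ {h : Fin (l + n) | (h : ℕ) < l} = T)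
    (m : ℕ) (hm : T.ncard = m)
    (hsmall : 2 * m + 2 < 3 * δ) :
    ∀ j, v j = w j :=
  tuple_unique_of_small_access_group_general l n D δ hδ v w hv hw hvunit hwunit T hvT hwT m hm
    hsmall
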